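/- arXiv:1503.05367 — 5 statements merged into one kernel-verified Lean document; each statement's English description precedes it below -/
import Mathlib

section
/- Let x̃_1,…,x̃_K be i.i.d. Gamma(N−M+1,1) random variables (density e^{−x} x^{N−M}/(N−M)!), and let x_k be the k-th largest. Then for any fixed ε > 0, as ρ → ∞, P(x_k ≤ ε/ρ) = Θ(ρ^{−(N−M+1)(K−k+1)}); more precisely ρ^{(N−M+1)(K−k+1)} P(x_k ≤ ε/ρ) converges to (K!/((K−k)!(k−1)!(K−k+1))) · (ε^{N−M+1}/(N−M+1)!)^{K−k+1}. -/
open MeasureTheory ProbabilityTheory Real Filter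

/-- The `k`-th largest value (0-indexed: `k = 0` is the largest) among `v 0, …, v (K-1)`. -/
noncomputable def orderStatDesc {K : ℕ} (v : Fin K → ℝ) (k : ℕ) (hk : k < K) : ℝ :=
  ((List.ofFn v).insertionSort (· ≥ ·)).get ⟨k, by simpa using hk⟩

open Finset Topology
open scoped Nat

/-! The event `x_k ≤ t` says that at least `m = K - k + 1` of the `x̃_i` lie in `(-∞, t]`.
Writing `F(t) = P(x̃_i ≤ t)`, the union bound over the `m`-subsets of indices, and the disjoint
events "exactly the indices in `S` lie below `t`" for `#S = m`, give
`C(K, m) F^m (1 - F)^(K - m) ≤ P(x_k ≤ t) ≤ C(K, m) F^m`.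
With `n = N - M`, the `Gamma(n + 1, 1)` CDF satisfies
`e^{-t} t^(n+1)/(n+1)! ≤ F(t) ≤ t^(n+1)/(n+1)!` for `t ≥ 0`, since `e^{-t} ≤ e^{-x} ≤ 1` on
`[0, t]`; so `ρ^(n+1) F(ε/ρ) → ε^(n+1)/(n+1)!` and `F(ε/ρ) → 0`. -/

theorem List.Pairwise.getElem_le_iff_length_sub_le_countP {α : Type*} [LinearOrder α]
    {l : List α} (hl : l.Pairwise (· ≥ ·)) {j : ℕ} (hj : j < l.length) (t : α) :
    l[j] ≤ t ↔ l.length - j ≤ l.countP (· ≤ t) := by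
  have hsplit : l = l.take j ++ l[j] :: l.drop (j + 1) := by
    rw [← List.drop_eq_getElem_cons hj, List.take_append_drop]
  have hcount := congrArg (List.countP (· ≤ t)) hsplit
  have hlen : l.length - j = (l.drop (j + 1)).length + 1 := by simp; omega
  simp only [List.countP_append, List.countP_cons, decide_eq_true_eq] at hcount
  rw [hsplit, List.pairwise_append, List.pairwise_cons] at hl
  obtain ⟨-, ⟨hhead, -⟩, htake⟩ := hl
  rw [hcount, hlen]
  constructor
  · intro h
    have hdrop : (l.drop (j + 1)).countP (· ≤ t) = (l.drop (j + 1)).length :=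
      List.countP_eq_length.2 fun x hx => by simpa using (hhead x hx).trans h
    simp [h, hdrop]
  · intro h
    by_contra! hlt
    have htake0 : (l.take j).countP (· ≤ t) = 0 := List.countP_eq_zero.2 fun x hx => by
      simpa using hlt.trans_le (htake x hx _ List.mem_cons_self)
    have hdrop := List.countP_le_length (p := (· ≤ t)) (l := l.drop (j + 1))
    rw [htake0, if_neg hlt.not_ge] at h
    omega

theorem orderStatDesc_le_iff {K : ℕ} (v : Fin K → ℝ) {j : ℕ} (hj : j < K) (t : ℝ) :
    orderStatDesc v j hj ≤ t ↔ K - j ≤ #{i | v i ≤ t} := by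
  have hsorted := List.pairwise_insertionSort (· ≥ ·) (List.ofFn v)
  have hperm := List.perm_insertionSort (· ≥ ·) (List.ofFn v)
  have hcount : (List.ofFn v).countP (· ≤ t) = #{i | v i ≤ t} := by
    rw [List.ofFn_eq_map, List.countP_map, card_def, filter_val, Fin.univ_def]
    simp [Multiset.filter_coe, List.countP_eq_length_filter, Function.comp_def]
  rw [orderStatDesc, List.get_eq_getElem, hsorted.getElem_le_iff_length_sub_le_countP]
  simp only [hperm.countP_eq, hcount, List.length_insertionSort, List.length_ofFn]

section CountingEvents

variable {Ω ι β : Type*} [Fintype ι] {X : ι → Ω → β} {B : Set β} [DecidablePred (· ∈ B)]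

theorem setOf_le_card_filter_mem_eq_biUnion (m : ℕ) :
    {ω | m ≤ #{i | X i ω ∈ B}} = ⋃ S ∈ powersetCard m univ, ⋂ i ∈ S, X i ⁻¹' B := by
  ext ω
  simp only [Set.mem_ofPred_eq, Set.mem_iUnion, Set.mem_iInter, mem_powersetCard,
    Set.mem_preimage, exists_prop]
  constructor
  · intro h
    obtain ⟨S, hS, hcard⟩ := exists_subset_card_eq h
    exact ⟨S, ⟨subset_univ S, hcard⟩, fun i hi => (mem_filter.1 (hS hi)).2⟩
  · rintro ⟨S, ⟨-, rfl⟩, hS⟩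
    exact card_le_card fun i hi => mem_filter.2 ⟨mem_univ i, hS i hi⟩

theorem setOf_filter_mem_eq_iInter [DecidableEq ι] (S : Finset ι) :
    {ω | univ.filter (fun i => X i ω ∈ B) = S}
      = ⋂ i, X i ⁻¹' (if i ∈ S then B else Bᶜ) := by
  ext ω
  simp only [Set.mem_ofPred_eq, Finset.ext_iff, mem_filter, mem_univ, true_and,
    Set.mem_iInter, Set.mem_preimage]
  refine forall_congr' fun i => ?_
  split_ifs with hi <;> simp [hi]

end CountingEvents

section IndependentEvents

variable {Ω ι β : Type*} [MeasurableSpace Ω] [MeasurableSpace β]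
  {μ : Measure Ω} {X : ι → Ω → β} {B : Set β} {p : ℝ}

theorem ProbabilityTheory.iIndepFun.measureReal_biInter_preimage (hX : iIndepFun X μ)
    (hB : MeasurableSet B) (hp : ∀ i, μ.real (X i ⁻¹' B) = p) (S : Finset ι) :
    μ.real (⋂ i ∈ S, X i ⁻¹' B) = p ^ #S := by
  rw [measureReal_def, hX.measure_inter_preimage_eq_mul S fun _ _ => hB, ENNReal.toReal_prod]
  simp_rw [← measureReal_def, hp, prod_const]

variable [Fintype ι] [DecidablePred (· ∈ B)]

theorem ProbabilityTheory.iIndepFun.measureReal_setOf_filter_mem_eq [IsProbabilityMeasure μ]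
    (hX : iIndepFun X μ) (hXm : ∀ i, Measurable (X i)) (hB : MeasurableSet B)
    (hp : ∀ i, μ.real (X i ⁻¹' B) = p) (S : Finset ι) :
    μ.real {ω | univ.filter (fun i => X i ω ∈ B) = S}
      = p ^ #S * (1 - p) ^ (Fintype.card ι - #S) := by
  classical
  have hmeas : ∀ i, MeasurableSet (if i ∈ S then B else Bᶜ) := fun i => by
    split_ifs
    exacts [hB, hB.compl]
  have hprob : ∀ i, μ.real (X i ⁻¹' (if i ∈ S then B else Bᶜ)) = if i ∈ S then p else 1 - p :=
    fun i => by
      split_ifs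
      · exact hp i
      · rw [Set.preimage_compl, measureReal_compl (hXm i hB), probReal_univ, hp i]
  have hindep := hX.measure_inter_preimage_eq_mul univ fun i _ => hmeas i
  simp only [mem_univ, Set.iInter_true] at hindep
  rw [setOf_filter_mem_eq_iInter, measureReal_def, hindep, ENNReal.toReal_prod]
  simp_rw [← measureReal_def, hprob]
  rw [prod_ite, filter_mem_eq_inter, ← sdiff_eq_filter, univ_inter, prod_const, prod_const,
    ← compl_eq_univ_sdiff, card_compl]

theorem ProbabilityTheory.iIndepFun.measureReal_setOf_le_card_filter_mem_le
    (hX : iIndepFun X μ) (hB : MeasurableSet B) (hp : ∀ i, μ.real (X i ⁻¹' B) = p) (m : ℕ) :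
    μ.real {ω | m ≤ #{i | X i ω ∈ B}} ≤ (Fintype.card ι).choose m * p ^ m := by
  rw [setOf_le_card_filter_mem_eq_biUnion]
  calc μ.real (⋃ S ∈ powersetCard m univ, ⋂ i ∈ S, X i ⁻¹' B)
      ≤ ∑ S ∈ powersetCard m univ, μ.real (⋂ i ∈ S, X i ⁻¹' B) :=
        measureReal_biUnion_finset_le _ _
    _ = ∑ S ∈ powersetCard m (univ : Finset ι), p ^ m := sum_congr rfl fun S hS => by
        rw [hX.measureReal_biInter_preimage hB hp, (mem_powersetCard.1 hS).2]
    _ = _ := by simp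

theorem ProbabilityTheory.iIndepFun.le_measureReal_setOf_le_card_filter_mem
    [IsProbabilityMeasure μ] (hX : iIndepFun X μ) (hXm : ∀ i, Measurable (X i))
    (hB : MeasurableSet B) (hp : ∀ i, μ.real (X i ⁻¹' B) = p) (m : ℕ) :
    (Fintype.card ι).choose m * p ^ m * (1 - p) ^ (Fintype.card ι - m)
      ≤ μ.real {ω | m ≤ #{i | X i ω ∈ B}} := by
  classical
  set E : Finset ι → Set Ω := fun S => {ω | univ.filter (fun i => X i ω ∈ B) = S}
  have hEmeas : ∀ S, MeasurableSet (E S) := fun S => by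
    simp only [E, setOf_filter_mem_eq_iInter]
    exact MeasurableSet.iInter fun i => hXm i (by split_ifs; exacts [hB, hB.compl])
  calc (Fintype.card ι).choose m * p ^ m * (1 - p) ^ (Fintype.card ι - m)
      = ∑ S ∈ powersetCard m univ, p ^ m * (1 - p) ^ (Fintype.card ι - m) := by
        simp [mul_assoc]
    _ = ∑ S ∈ powersetCard m univ, μ.real (E S) := sum_congr rfl fun S hS => by
        rw [hX.measureReal_setOf_filter_mem_eq hXm hB hp, (mem_powersetCard.1 hS).2]
    _ = μ.real (⋃ S ∈ powersetCard m univ, E S) :=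
        (measureReal_biUnion_finset (fun S _ T _ hST =>
          Set.disjoint_left.2 fun ω hS hT => hST (hS.symm.trans hT)) fun S _ => hEmeas S).symm
    _ ≤ μ.real {ω | m ≤ #{i | X i ω ∈ B}} := by
        refine measureReal_mono (Set.iUnion₂_subset fun S hS ω hω => ?_)
        rw [← (mem_powersetCard.1 hS).2]
        exact (congrArg card hω).ge

end IndependentEvents

/-- The paper's `F(t) = γ(n + 1, t) / n!`, the CDF of `Gamma(n + 1, 1)` for `t ≥ 0`. -/
noncomputable def erlangCDF (n : ℕ) (t : ℝ) : ℝ :=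
  ∫ x in (0 : ℝ)..t, exp (-x) * x ^ n / n !

theorem integral_pow_div_factorial (n : ℕ) (t : ℝ) :
    ∫ x in (0 : ℝ)..t, x ^ n / n ! = t ^ (n + 1) / (n + 1)! := by
  rw [intervalIntegral.integral_div, integral_pow, Nat.factorial_succ]
  push_cast
  field_simp
  ring

section Erlang

variable {n : ℕ} {t : ℝ}

theorem erlangCDF_nonneg (ht : 0 ≤ t) : 0 ≤ erlangCDF n t :=
  intervalIntegral.integral_nonneg ht fun x hx => by have := hx.1; positivity

theorem erlangCDF_le (ht : 0 ≤ t) : erlangCDF n t ≤ t ^ (n + 1) / (n + 1)! := by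
  rw [← integral_pow_div_factorial]
  refine intervalIntegral.integral_mono_on ht
    ((by fun_prop : Continuous _).intervalIntegrable _ _)
    ((by fun_prop : Continuous _).intervalIntegrable _ _) fun x hx => ?_
  have hx0 : 0 ≤ x := hx.1
  gcongr
  exact mul_le_of_le_one_left (by positivity) (exp_le_one_iff.2 (by linarith))

theorem exp_neg_mul_le_erlangCDF (ht : 0 ≤ t) :
    exp (-t) * (t ^ (n + 1) / (n + 1)!) ≤ erlangCDF n t := by
  rw [← integral_pow_div_factorial, ← intervalIntegral.integral_const_mul]
  refine intervalIntegral.integral_mono_on ht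
    ((by fun_prop : Continuous _).intervalIntegrable _ _)
    ((by fun_prop : Continuous _).intervalIntegrable _ _) fun x hx => ?_
  have hx0 : 0 ≤ x := hx.1
  rw [mul_div_assoc]
  gcongr
  exact hx.2

theorem measureReal_preimage_Iic_eq_erlangCDF {Ω : Type*} [MeasurableSpace Ω] {μ : Measure Ω}
    {Y : Ω → ℝ} (hY : Measurable Y)
    (hdens : μ.map Y = volume.withDensity (fun x => Set.indicator (Set.Ici (0 : ℝ))
      (fun x => ENNReal.ofReal (exp (-x) * x ^ n / n !)) x)) (ht : 0 ≤ t) :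
    μ.real (Y ⁻¹' Set.Iic t) = erlangCDF n t := by
  have hint : IntegrableOn (fun x : ℝ => exp (-x) * x ^ n / n !) (Set.Icc 0 t) :=
    (by fun_prop : Continuous fun x : ℝ => exp (-x) * x ^ n / n !).integrableOn_Icc
  have hnonneg : ∀ᵐ x ∂volume.restrict (Set.Icc 0 t), 0 ≤ exp (-x) * x ^ n / n ! :=
    (ae_restrict_iff' measurableSet_Icc).2 (Eventually.of_forall fun x hx => by
      have := hx.1; positivity)
  rw [measureReal_def, ← Measure.map_apply hY measurableSet_Iic, hdens,
    withDensity_apply _ measurableSet_Iic, lintegral_indicator measurableSet_Ici,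
    Measure.restrict_restrict measurableSet_Ici, Set.Ici_inter_Iic,
    ← ofReal_integral_eq_lintegral_ofReal hint hnonneg,
    ENNReal.toReal_ofReal (integral_nonneg_of_ae hnonneg), erlangCDF,
    intervalIntegral.integral_of_le ht, integral_Icc_eq_integral_Ioc]

end Erlang

theorem tendsto_erlangCDF_div_atTop (n : ℕ) {ε : ℝ} (hε : 0 ≤ ε) :
    Tendsto (fun ρ => erlangCDF n (ε / ρ)) atTop (𝓝 0) := by
  have hdiv : Tendsto (fun ρ : ℝ => ε / ρ) atTop (𝓝 0) :=
    tendsto_const_nhds.div_atTop tendsto_id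
  have hbound : Tendsto (fun ρ : ℝ => (ε / ρ) ^ (n + 1) / (n + 1)!) atTop (𝓝 0) := by
    simpa using (hdiv.pow (n + 1)).div_const ((n + 1)! : ℝ)
  refine tendsto_of_tendsto_of_tendsto_of_le_of_le' tendsto_const_nhds hbound ?_ ?_ <;>
    filter_upwards [eventually_gt_atTop 0] with ρ hρ
  exacts [erlangCDF_nonneg (by positivity), erlangCDF_le (by positivity)]

theorem tendsto_pow_mul_erlangCDF_div_atTop (n : ℕ) {ε : ℝ} (hε : 0 ≤ ε) :
    Tendsto (fun ρ => ρ ^ (n + 1) * erlangCDF n (ε / ρ)) atTop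
      (𝓝 (ε ^ (n + 1) / (n + 1)!)) := by
  have hexp : Tendsto (fun ρ : ℝ => exp (-(ε / ρ)) * (ε ^ (n + 1) / (n + 1)!)) atTop
      (𝓝 (ε ^ (n + 1) / (n + 1)!)) := by
    have hdiv : Tendsto (fun ρ : ℝ => ε / ρ) atTop (𝓝 0) :=
      tendsto_const_nhds.div_atTop tendsto_id
    have : Tendsto (fun ρ : ℝ => -(ε / ρ)) atTop (𝓝 0) := by simpa using hdiv.neg
    simpa using ((continuous_exp.tendsto 0).comp this).mul_const (ε ^ (n + 1) / (n + 1)!)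
  have hscale : ∀ ρ : ℝ, 0 < ρ → ρ ^ (n + 1) * ((ε / ρ) ^ (n + 1) / (n + 1)!)
      = ε ^ (n + 1) / (n + 1)! := fun ρ hρ => by
    rw [← mul_div_assoc, ← mul_pow, mul_div_cancel₀ _ hρ.ne']
  refine tendsto_of_tendsto_of_tendsto_of_le_of_le' hexp tendsto_const_nhds ?_ ?_ <;>
    filter_upwards [eventually_gt_atTop 0] with ρ hρ
  · calc exp (-(ε / ρ)) * (ε ^ (n + 1) / (n + 1)!)
        = ρ ^ (n + 1) * (exp (-(ε / ρ)) * ((ε / ρ) ^ (n + 1) / (n + 1)!)) := by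
          rw [← hscale ρ hρ]; ring
      _ ≤ ρ ^ (n + 1) * erlangCDF n (ε / ρ) := by
          gcongr; exact exp_neg_mul_le_erlangCDF (by positivity)
  · calc ρ ^ (n + 1) * erlangCDF n (ε / ρ)
        ≤ ρ ^ (n + 1) * ((ε / ρ) ^ (n + 1) / (n + 1)!) := by
          gcongr; exact erlangCDF_le (by positivity)
      _ = ε ^ (n + 1) / (n + 1)! := hscale ρ hρ

theorem tendsto_pow_mul_of_le_of_le {F G : ℝ → ℝ} {L c : ℝ} {d m r : ℕ}
    (hu : Tendsto (fun ρ => ρ ^ d * F ρ) atTop (𝓝 L)) (hF : Tendsto F atTop (𝓝 0))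
    (hlow : ∀ᶠ ρ in atTop, c * F ρ ^ m * (1 - F ρ) ^ r ≤ G ρ)
    (hup : ∀ᶠ ρ in atTop, G ρ ≤ c * F ρ ^ m) :
    Tendsto (fun ρ => ρ ^ (d * m) * G ρ) atTop (𝓝 (c * L ^ m)) := by
  have hlim : Tendsto (fun ρ => c * (ρ ^ d * F ρ) ^ m * (1 - F ρ) ^ r) atTop
      (𝓝 (c * L ^ m)) := by
    simpa using ((hu.pow m).const_mul c).mul (((tendsto_const_nhds (x := 1)).sub hF).pow r)
  refine tendsto_of_tendsto_of_tendsto_of_le_of_le' hlim ((hu.pow m).const_mul c) ?_ ?_ <;>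
    filter_upwards [hlow, hup, eventually_ge_atTop 0] with ρ hlow hup hρ
  · calc c * (ρ ^ d * F ρ) ^ m * (1 - F ρ) ^ r
        = ρ ^ (d * m) * (c * F ρ ^ m * (1 - F ρ) ^ r) := by ring
      _ ≤ ρ ^ (d * m) * G ρ := by gcongr
  · calc ρ ^ (d * m) * G ρ ≤ ρ ^ (d * m) * (c * F ρ ^ m) := by gcongr
      _ = c * (ρ ^ d * F ρ) ^ m := by ring

theorem cast_choose_sub_add_one {K k : ℕ} (hk : 1 ≤ k) (hkK : k ≤ K) :
    (K.choose (K - k + 1) : ℝ) = K ! / ((K - k)! * (k - 1)! * (K - k + 1)) := by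
  rw [Nat.cast_choose ℝ (by omega : K - k + 1 ≤ K), Nat.factorial_succ,
    show K - (K - k + 1) = k - 1 by omega]
  push_cast [Nat.cast_sub hkK]
  ring

/-- If `x̃_1, …, x̃_K` are i.i.d. `Gamma(N-M+1, 1)` (density `e^{-x} x^{N-M}/(N-M)!`) and `x_k`
is the `k`-th largest, then for fixed `ε > 0`, as `ρ → ∞`,
`ρ^{(N-M+1)(K-k+1)} · P(x_k ≤ ε/ρ) →
  (K!/((K-k)!(k-1)!(K-k+1))) · (ε^{N-M+1}/(N-M+1)!)^{K-k+1}`. -/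
theorem diversity_order_of_kth_largest_gamma
    {Ω : Type*} [MeasurableSpace Ω] (P : Measure Ω) [IsProbabilityMeasure P]
    (N M K k : ℕ) (hk1 : 1 ≤ k) (hkK : k ≤ K)
    (X : Fin K → Ω → ℝ) (hXmeas : ∀ i, Measurable (X i))
    (hiid : iIndepFun X P)
    (hdens : ∀ i, P.map (X i) = volume.withDensity (fun x =>
        Set.indicator (Set.Ici (0 : ℝ))
          (fun x => ENNReal.ofReal (Real.exp (-x) * x ^ (N - M) / (N - M).factorial)) x))
    (ε : ℝ) (hε : 0 < ε) :
    Filter.Tendsto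
      (fun ρ : ℝ => ρ ^ ((N - M + 1) * (K - k + 1))
        * (P {ω | orderStatDesc (fun i => X i ω) (k - 1) (by omega) ≤ ε / ρ}).toReal)
      Filter.atTop
      (nhds ((K.factorial : ℝ)
          / ((K - k).factorial * (k - 1).factorial * (K - k + 1))
        * (ε ^ (N - M + 1) / (N - M + 1).factorial) ^ (K - k + 1))) := by
  set m := K - k + 1
  have hevent : ∀ ρ : ℝ, {ω | orderStatDesc (fun i => X i ω) (k - 1) (by omega) ≤ ε / ρ}
      = {ω | m ≤ #{i | X i ω ∈ Set.Iic (ε / ρ)}} := fun ρ => by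
    ext ω
    simp [orderStatDesc_le_iff, m, show K - (k - 1) = K - k + 1 by omega]
  have hcdf : ∀ ρ : ℝ, 0 < ρ → ∀ i,
      P.real (X i ⁻¹' Set.Iic (ε / ρ)) = erlangCDF (N - M) (ε / ρ) :=
    fun ρ hρ i => measureReal_preimage_Iic_eq_erlangCDF (hXmeas i) (hdens i) (by positivity)
  rw [← cast_choose_sub_add_one hk1 hkK]
  simp_rw [← measureReal_def, hevent]
  refine tendsto_pow_mul_of_le_of_le (r := K - m) (tendsto_pow_mul_erlangCDF_div_atTop _ hε.le)
    (tendsto_erlangCDF_div_atTop _ hε.le) ?_ ?_ <;>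
    filter_upwards [eventually_gt_atTop 0] with ρ hρ
  · simpa using
      hiid.le_measureReal_setOf_le_card_filter_mem hXmeas measurableSet_Iic (hcdf ρ hρ) m
  · simpa using hiid.measureReal_setOf_le_card_filter_mem_le measurableSet_Iic (hcdf ρ hρ) m
end

section
/- Let X₂ be the second largest of K i.i.d. Exponential(1) random variables (K ≥ 2). Then for any φ > 0, E[log₂(1 + φX₂)] = (1/ln 2)[ K Σ_{p=1}^{K−1} C(K−1,p)(−1)^p e^{p/φ} Ei(−p/φ) − (K−1) Σ_{l=1}^{K} C(K,l)(−1)^l e^{l/φ} Ei(−l/φ) ]. -/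
open MeasureTheory Real Filter

/-- `EiNeg y = Ei(-y) = -∫_y^∞ e^{-t}/t dt` for `y > 0`, the exponential integral. -/
noncomputable def EiNeg (y : ℝ) : ℝ := -∫ t in Set.Ioi y, Real.exp (-t) / t

/-!
Since `log₂(1 + φX) ≥ 0`, the layer-cake formula gives
`E[log₂(1 + φX)] = ∫₀^∞ (1 - F((2^t - 1)/φ)) dt`. Expanding `1 - F(x)` binomially in
`e^{-x}` writes the integrand as a signed combination of `exp(-(n/φ)(2^t - 1))`, and the
substitution `u = (n/φ) 2^t` turns each of these integrals into `-e^{n/φ} Ei(-n/φ) / ln 2`.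
-/

open Set

theorem one_sub_pow_eq_one_add_sum_Icc {R : Type*} [CommRing R] (y : R) (n : ℕ) :
    (1 - y) ^ n = 1 + ∑ p ∈ Finset.Icc 1 n, (n.choose p : R) * (-1) ^ p * y ^ p := by
  rw [sub_eq_neg_add, add_pow, Finset.range_eq_Ico, Finset.sum_eq_sum_Ico_succ_bot n.succ_pos,
    zero_add, Nat.succ_eq_add_one, Finset.Ico_add_one_right_eq_Icc]
  simp only [one_pow, mul_one, pow_zero, Nat.choose_zero_right, Nat.cast_one]
  refine congrArg _ (Finset.sum_congr rfl fun p _ => by rw [neg_pow]; ring)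

theorem one_sub_second_largest_cdf {R : Type*} [CommRing R] (K : ℕ) (y : R) :
    1 - (K * (1 - y) ^ (K - 1) - (K - 1) * (1 - y) ^ K)
      = -K * ∑ p ∈ Finset.Icc 1 (K - 1), ((K - 1).choose p : R) * (-1) ^ p * y ^ p
        + (K - 1) * ∑ l ∈ Finset.Icc 1 K, (K.choose l : R) * (-1) ^ l * y ^ l := by
  rw [one_sub_pow_eq_one_add_sum_Icc, one_sub_pow_eq_one_add_sum_Icc]
  ring

theorem integral_exp_neg_mul_exp_Ioi {c : ℝ} (hc : 0 < c) :
    ∫ x in Ioi 0, exp (-(c * exp x)) = -EiNeg c := by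
  set g : ℝ → ℝ := fun u => exp (-u) / u
  calc ∫ x in Ioi 0, exp (-(c * exp x))
      = ∫ x in Ioi 0, exp x • (c * g (c * exp x)) := by
        refine setIntegral_congr_fun measurableSet_Ioi fun x _ => ?_
        simp only [g, smul_eq_mul]
        field_simp
    _ = ∫ y in Ioi 1, c * g (c * y) := by
        rw [integral_comp_exp_Ioi (fun y => c * g (c * y)) 0, exp_zero]
    _ = ∫ u in Ioi c, g u := by
        rw [integral_const_mul, ← smul_eq_mul, integral_comp_mul_left_Ioi' g 1 hc, mul_one]
    _ = -EiNeg c := by rw [EiNeg, neg_neg]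

theorem integrableOn_exp_neg_mul_rpow_sub_one {b c : ℝ} (hb : 1 < b) (hc : 0 < c) :
    IntegrableOn (fun t : ℝ => exp (-(c * (b ^ t - 1)))) (Ioi 0) := by
  have hlogb : 0 < log b := log_pos hb
  have hb0 : b ≠ 0 := by positivity
  refine (exp_neg_integrableOn_Ioi 0 (mul_pos hc hlogb)).mono' ?_ ?_
  · have hcont : Continuous fun t : ℝ => exp (-(c * (b ^ t - 1))) := by fun_prop
    exact hcont.aestronglyMeasurable.restrict
  · filter_upwards [ae_restrict_mem measurableSet_Ioi] with t ht
    rw [norm_of_nonneg (exp_pos _).le, exp_le_exp, rpow_def_of_pos (by linarith)]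
    have := add_one_le_exp (log b * t)
    nlinarith

theorem integral_exp_neg_mul_rpow_sub_one {b c : ℝ} (hb : 1 < b) (hc : 0 < c) :
    ∫ t in Ioi (0 : ℝ), exp (-(c * (b ^ t - 1))) = -(1 / log b) * (exp c * EiNeg c) := by
  have hlogb : 0 < log b := log_pos hb
  have hsplit : ∀ t : ℝ, exp (-(c * (b ^ t - 1))) = exp c * exp (-(c * exp (log b * t))) := by
    intro t
    rw [rpow_def_of_pos (by linarith), ← exp_add]
    ring_nf
  simp_rw [hsplit]
  rw [integral_const_mul, integral_comp_mul_left_Ioi (fun x => exp (-(c * exp x))) 0 hlogb,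
    mul_zero, integral_exp_neg_mul_exp_Ioi hc, smul_eq_mul]
  ring

theorem integrableOn_sum_exp_neg_mul_rpow_sub_one {ι : Type*} (s : Finset ι) (w c : ι → ℝ)
    {b : ℝ} (hb : 1 < b) (hc : ∀ i ∈ s, 0 < c i) :
    IntegrableOn (fun t : ℝ => ∑ i ∈ s, w i * exp (-(c i * (b ^ t - 1)))) (Ioi 0) :=
  integrable_finsetSum _ fun i hi =>
    (integrableOn_exp_neg_mul_rpow_sub_one hb (hc i hi)).const_mul _

theorem integral_sum_exp_neg_mul_rpow_sub_one {ι : Type*} (s : Finset ι) (w c : ι → ℝ)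
    {b : ℝ} (hb : 1 < b) (hc : ∀ i ∈ s, 0 < c i) :
    ∫ t in Ioi (0 : ℝ), ∑ i ∈ s, w i * exp (-(c i * (b ^ t - 1)))
      = -(1 / log b) * ∑ i ∈ s, w i * exp (c i) * EiNeg (c i) := by
  rw [integral_finsetSum _ fun i hi =>
      (integrableOn_exp_neg_mul_rpow_sub_one hb (hc i hi)).const_mul _, Finset.mul_sum]
  refine Finset.sum_congr rfl fun i hi => ?_
  rw [integral_const_mul, integral_exp_neg_mul_rpow_sub_one hb (hc i hi)]
  ring

theorem ae_nonneg_of_measure_le_eq_zero {Ω : Type*} [MeasurableSpace Ω] {μ : Measure Ω}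
    {X : Ω → ℝ} (h : ∀ x < 0, μ {ω | X ω ≤ x} = 0) : 0 ≤ᵐ[μ] X := by
  have hgt : ∀ n : ℕ, ∀ᵐ ω ∂μ, -(1 / (n + 1 : ℝ)) < X ω := fun n => by
    rw [ae_iff]
    simpa only [not_lt] using h _ (neg_neg_of_pos (by positivity))
  filter_upwards [ae_all_iff.2 hgt] with ω hω
  by_contra! hneg
  obtain ⟨n, hn⟩ := exists_nat_one_div_lt (neg_pos.2 hneg)
  linarith [hω n]

theorem integral_logb_one_add_mul_eq_integral_tail {Ω : Type*} [MeasurableSpace Ω]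
    {P : Measure Ω} [IsProbabilityMeasure P] {X : Ω → ℝ} (hXm : Measurable X)
    (hX0 : 0 ≤ᵐ[P] X) {b φ : ℝ} (hb : 1 < b) (hφ : 0 < φ)
    (hint : Integrable (fun ω => logb b (1 + φ * X ω)) P) :
    ∫ ω, logb b (1 + φ * X ω) ∂P
      = ∫ t in Ioi (0 : ℝ), (1 - P.real {ω | X ω ≤ (b ^ t - 1) / φ}) := by
  have hY0 : 0 ≤ᵐ[P] fun ω => logb b (1 + φ * X ω) := by
    filter_upwards [hX0] with ω (h : 0 ≤ X ω)
    exact logb_nonneg hb (by nlinarith)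
  rw [hint.integral_eq_integral_meas_lt hY0]
  refine setIntegral_congr_fun measurableSet_Ioi fun t _ => ?_
  have hset : {ω | t < logb b (1 + φ * X ω)}
      =ᵐ[P] ({ω | X ω ≤ (b ^ t - 1) / φ}ᶜ : Set Ω) := by
    refine eventuallyEq_set.2 ?_
    filter_upwards [hX0] with ω (h : 0 ≤ X ω)
    change t < logb b (1 + φ * X ω) ↔ ¬X ω ≤ (b ^ t - 1) / φ
    rw [not_le, div_lt_iff₀ hφ, lt_logb_iff_rpow_lt hb (by nlinarith)]
    constructor <;> intro <;> linarith
  rw [measureReal_congr hset, probReal_compl_eq_one_sub (measurableSet_le hXm measurable_const)]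

theorem expected_logb_of_second_largest_of_exponentials_general
    {Ω : Type*} [MeasurableSpace Ω] (P : Measure Ω) [IsProbabilityMeasure P]
    (K : ℕ)
    (X : Ω → ℝ) (hXmeas : Measurable X)
    (hcdf : ∀ x : ℝ, (P {ω | X ω ≤ x}).toReal
      = if 0 ≤ x then
          (K : ℝ) * (1 - Real.exp (-x)) ^ (K - 1)
            - ((K : ℝ) - 1) * (1 - Real.exp (-x)) ^ K
        else 0)
    (φ : ℝ) (hφ : 0 < φ)
    (hint : Integrable (fun ω => Real.logb 2 (1 + φ * X ω)) P) :
    ∫ ω, Real.logb 2 (1 + φ * X ω) ∂P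
      = (1 / Real.log 2) *
          ((K : ℝ) * ∑ p ∈ Finset.Icc 1 (K - 1),
              ((K - 1).choose p : ℝ) * (-1) ^ p * Real.exp (p / φ) * EiNeg (p / φ)
            - ((K : ℝ) - 1) * ∑ l ∈ Finset.Icc 1 K,
              (K.choose l : ℝ) * (-1) ^ l * Real.exp (l / φ) * EiNeg (l / φ)) := by
  have hX0 : 0 ≤ᵐ[P] X := ae_nonneg_of_measure_le_eq_zero fun x hx => by
    have hF := hcdf x
    rw [if_neg hx.not_ge, ENNReal.toReal_eq_zero_iff] at hF
    exact hF.resolve_right (measure_ne_top P _)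
  have htail : ∀ t ∈ Ioi (0 : ℝ), 1 - P.real {ω | X ω ≤ (2 ^ t - 1) / φ}
      = -K * ∑ p ∈ Finset.Icc 1 (K - 1),
            ((K - 1).choose p : ℝ) * (-1) ^ p * exp (-(p / φ * (2 ^ t - 1)))
        + (K - 1) * ∑ l ∈ Finset.Icc 1 K,
            (K.choose l : ℝ) * (-1) ^ l * exp (-(l / φ * (2 ^ t - 1))) := by
    intro t ht
    have hs : 0 ≤ (2 ^ t - 1) / φ :=
      div_nonneg (by linarith [one_le_rpow one_le_two (le_of_lt ht)]) hφ.le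
    have hpow : ∀ n : ℕ, exp (-((2 ^ t - 1) / φ)) ^ n = exp (-(n / φ * (2 ^ t - 1))) := by
      intro n
      rw [← exp_nat_mul]
      ring_nf
    rw [measureReal_def, hcdf, if_pos hs, one_sub_second_largest_cdf]
    simp_rw [hpow]
  have hrate : ∀ n ∈ Finset.Icc 1 K, 0 < (n : ℝ) / φ := fun n hn =>
    div_pos (Nat.cast_pos.2 (Finset.mem_Icc.1 hn).1) hφ
  have hrate' : ∀ p ∈ Finset.Icc 1 (K - 1), 0 < (p : ℝ) / φ := fun p hp =>
    hrate p (Finset.Icc_subset_Icc_right (Nat.sub_le K 1) hp)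
  rw [integral_logb_one_add_mul_eq_integral_tail hXmeas hX0 one_lt_two hφ hint,
    setIntegral_congr_fun measurableSet_Ioi htail,
    integral_add ((integrableOn_sum_exp_neg_mul_rpow_sub_one _ _ _ one_lt_two hrate').const_mul _)
      ((integrableOn_sum_exp_neg_mul_rpow_sub_one _ _ _ one_lt_two hrate).const_mul _),
    integral_const_mul, integral_const_mul,
    integral_sum_exp_neg_mul_rpow_sub_one _ (fun p => ((K - 1).choose p : ℝ) * (-1) ^ p)
      (fun p => p / φ) one_lt_two hrate',
    integral_sum_exp_neg_mul_rpow_sub_one _ (fun l => (K.choose l : ℝ) * (-1) ^ l)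
      (fun l => l / φ) one_lt_two hrate]
  ring

/-- If `X₂` is the second largest of `K ≥ 2` i.i.d. `Exponential(1)` random variables
(CDF `F(x) = K(1-e^{-x})^{K-1} - (K-1)(1-e^{-x})^K` for `x ≥ 0`), then for `φ > 0`,
`E[log₂(1+φX₂)] = (1/ln 2)[K Σ_{p=1}^{K-1} C(K-1,p)(-1)^p e^{p/φ} Ei(-p/φ)
                 - (K-1) Σ_{l=1}^K C(K,l)(-1)^l e^{l/φ} Ei(-l/φ)]`. -/
theorem expected_logb_of_second_largest_of_exponentials
    {Ω : Type*} [MeasurableSpace Ω] (P : Measure Ω) [IsProbabilityMeasure P]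
    (K : ℕ) (hK : 2 ≤ K)
    (X : Ω → ℝ) (hXmeas : Measurable X)
    (hcdf : ∀ x : ℝ, (P {ω | X ω ≤ x}).toReal
      = if 0 ≤ x then
          (K : ℝ) * (1 - Real.exp (-x)) ^ (K - 1)
            - ((K : ℝ) - 1) * (1 - Real.exp (-x)) ^ K
        else 0)
    (φ : ℝ) (hφ : 0 < φ)
    (hint : Integrable (fun ω => Real.logb 2 (1 + φ * X ω)) P) :
    ∫ ω, Real.logb 2 (1 + φ * X ω) ∂P
      = (1 / Real.log 2) *
          ((K : ℝ) * ∑ p ∈ Finset.Icc 1 (K - 1),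
              ((K - 1).choose p : ℝ) * (-1) ^ p * Real.exp (p / φ) * EiNeg (p / φ)
            - ((K : ℝ) - 1) * ∑ l ∈ Finset.Icc 1 K,
              (K.choose l : ℝ) * (-1) ^ l * Real.exp (l / φ) * EiNeg (l / φ)) :=
  expected_logb_of_second_largest_of_exponentials_general P K X hXmeas hcdf φ hφ hint
end

section
/- The function ϖ(k) = Σ_{l=1}^{k} C(k,l) (−1)^l log₂ l is monotonically increasing in k for k ≥ 2; equivalently ϖ(k+1) ≥ ϖ(k) for all k ≥ 2. -/
/-!
With `Δ` the forward difference of step `1`, `ϖ(k) = (-1)^k Δ^k log₂ 0`, so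
`ϖ(k+1) - ϖ(k) = -(-1)^k Δ^k log₂ 1`. Derivatives commute with `Δ`, and
`(-1)^n Δ^n (1/x) = n! / (x (x+1) ⋯ (x+n)) > 0`, so `(-1)^n Δ^n log` is strictly increasing on
`(0, ∞)`; hence `(-1)^(n+1) Δ^(n+1) log x = (-1)^n Δ^n log x - (-1)^n Δ^n log (x+1) < 0`.
-/

open Real Finset Function fwdDiff
open scoped Nat

lemma hasDerivAt_fwdDiff_iter {f f' : ℝ → ℝ} (hf : ∀ x, 0 < x → HasDerivAt f (f' x) x)
    (n : ℕ) {x : ℝ} (hx : 0 < x) : HasDerivAt (Δ_[1] ^[n] f) (Δ_[1] ^[n] f' x) x := by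
  induction n generalizing x with
  | zero => exact hf x hx
  | succ n ih =>
    simp only [iterate_succ_apply', fwdDiff]
    exact ((ih (by positivity)).comp_add_const x 1).sub (ih hx)

lemma fwdDiff_iter_inv {K : Type*} [Field K] (n : ℕ) {x : K} (hx : ∀ j ≤ n, x + j ≠ 0) :
    Δ_[1] ^[n] (·⁻¹) x = (-1) ^ n * n ! / ∏ j ∈ range (n + 1), (x + j) := by
  induction n generalizing x with
  | zero => simp
  | succ n ih =>
    have h0 : ∀ j ≤ n, x + j ≠ 0 := fun j hj => hx j (by omega)
    have h1 : ∀ j ≤ n, x + 1 + j ≠ 0 := fun j hj => by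
      convert hx (j + 1) (by omega) using 1; push_cast; ring
    rw [iterate_succ_apply', fwdDiff, ih h1, ih h0]
    set P := ∏ j ∈ range n, (x + (j + 1 : K)) with hP
    have hP0 : P ≠ 0 := prod_ne_zero_iff.2 fun j hj => by
      convert hx (j + 1) (by simp at hj; omega) using 1; push_cast; ring
    have hx0 : x ≠ 0 := by simpa using hx 0 (Nat.zero_le _)
    have hxn : x + (n + 1) ≠ 0 := by exact_mod_cast hx (n + 1) le_rfl
    have hprod_shift : ∏ j ∈ range (n + 1), (x + 1 + j) = P * (x + (n + 1)) := by
      rw [prod_range_succ, hP]; congr 1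
      · exact prod_congr rfl fun j _ => by ring
      · ring
    have hprod : ∏ j ∈ range (n + 1), (x + j) = P * x := by
      rw [prod_range_succ']; simp [hP]
    have hprod_succ : ∏ j ∈ range (n + 1 + 1), (x + j) = P * (x + (n + 1)) * x := by
      rw [prod_range_succ', prod_range_succ]; push_cast; simp [hP]
    rw [hprod_shift, hprod, hprod_succ, Nat.factorial_succ]
    push_cast
    field_simp
    ring

lemma neg_one_pow_mul_fwdDiff_iter_inv_pos (n : ℕ) {x : ℝ} (hx : 0 < x) :
    0 < (-1) ^ n * Δ_[1] ^[n] (·⁻¹) x := by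
  rw [fwdDiff_iter_inv n fun j _ => by positivity, ← mul_div_assoc, ← mul_assoc, ← mul_pow]
  norm_num
  positivity

lemma strictMonoOn_neg_one_pow_mul_fwdDiff_iter_log (n : ℕ) :
    StrictMonoOn (fun x => (-1) ^ n * Δ_[1] ^[n] log x) (Set.Ioi 0) := by
  have hderiv (x : ℝ) (hx : 0 < x) :
      HasDerivAt (fun x => (-1) ^ n * Δ_[1] ^[n] log x) ((-1) ^ n * Δ_[1] ^[n] (·⁻¹) x) x :=
    (hasDerivAt_fwdDiff_iter (fun y hy => hasDerivAt_log hy.ne') n hx).const_mul _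
  refine strictMonoOn_of_hasDerivWithinAt_pos (f' := fun x => (-1) ^ n * Δ_[1] ^[n] (·⁻¹) x)
    (convex_Ioi 0) (fun x hx => (hderiv x hx).continuousAt.continuousWithinAt) ?_ ?_ <;>
    rw [interior_Ioi] <;> intro x hx
  · exact (hderiv x hx).hasDerivWithinAt
  · exact neg_one_pow_mul_fwdDiff_iter_inv_pos n hx

lemma neg_one_pow_mul_fwdDiff_iter_log_neg (n : ℕ) {x : ℝ} (hx : 0 < x) :
    (-1) ^ (n + 1) * Δ_[1] ^[n + 1] log x < 0 := by
  have hmono := strictMonoOn_neg_one_pow_mul_fwdDiff_iter_log n hx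
    (show x + 1 ∈ Set.Ioi 0 by simp only [Set.mem_Ioi]; positivity) (lt_add_one x)
  rw [iterate_succ_apply', fwdDiff, pow_succ]
  linarith

lemma sum_Icc_choose_mul_neg_one_pow_eq_fwdDiff_iter (f : ℝ → ℝ) (hf : f 0 = 0) (k : ℕ) :
    ∑ l ∈ Icc 1 k, (k.choose l : ℝ) * (-1) ^ l * f l = (-1) ^ k * Δ_[1] ^[k] f 0 := by
  rw [fwdDiff_iter_eq_sum_shift, mul_sum]
  refine (sum_subset (fun l hl => mem_range_succ_iff.2 (mem_Icc.1 hl).2) fun l hl hl' => ?_).trans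
    (sum_congr rfl fun l hl => ?_)
  · obtain rfl : l = 0 := by simp at hl hl'; omega
    simp [hf]
  · have hsign : (-1 : ℝ) ^ k * (-1) ^ (k - l) = (-1) ^ l := by
      rw [← pow_add, show k + (k - l) = 2 * (k - l) + l by simp at hl; omega, pow_add, pow_mul]
      norm_num
    simp only [zsmul_eq_mul, zero_add, nsmul_eq_mul, mul_one]
    push_cast
    rw [← hsign]
    ring

theorem varpi_monotone_general (k : ℕ) :
    (∑ l ∈ Finset.Icc 1 k, (k.choose l : ℝ) * (-1) ^ l * Real.logb 2 l)
      ≤ ∑ l ∈ Finset.Icc 1 (k + 1), ((k + 1).choose l : ℝ) * (-1) ^ l * Real.logb 2 l := by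
  have hsign : (-1) ^ k * Δ_[1] ^[k] (logb 2) 1 ≤ 0 := by
    rcases k with _ | n
    · simp
    · have hlogb : logb 2 = (log 2)⁻¹ • log := by ext; simp [logb, div_eq_inv_mul]
      rw [hlogb, fwdDiff_iter_const_smul, Pi.smul_apply, smul_eq_mul, mul_left_comm]
      exact mul_nonpos_of_nonneg_of_nonpos (by positivity)
        (neg_one_pow_mul_fwdDiff_iter_log_neg n one_pos).le
  -- `logb 2 0 = 0` lets both sums start at `l = 0`.
  rw [sum_Icc_choose_mul_neg_one_pow_eq_fwdDiff_iter _ logb_zero,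
    sum_Icc_choose_mul_neg_one_pow_eq_fwdDiff_iter _ logb_zero, iterate_succ_apply', fwdDiff,
    zero_add, pow_succ]
  linarith

/-- `ϖ(k) = Σ_{l=1}^k C(k,l) (-1)^l log₂ l` is monotonically increasing for `k ≥ 2`. -/
theorem varpi_monotone (k : ℕ) (hk : 2 ≤ k) :
    (∑ l ∈ Finset.Icc 1 k, (k.choose l : ℝ) * (-1) ^ l * Real.logb 2 l)
      ≤ ∑ l ∈ Finset.Icc 1 (k + 1), ((k + 1).choose l : ℝ) * (-1) ^ l * Real.logb 2 l :=
  varpi_monotone_general k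
end

section
/- For all ρ > 0 and x > 0, the inequality x < (2^{R}−1)/(ρ(1 − 2^{R}·(√(1+ρx)−1)/(ρx))) (assuming the denominator is positive) implies x < (2^{2R}−1)/ρ, for any R > 0. -/
open Real

/-- Writing `s = √(1 + t)`, so that `t = s² - 1`, clearing the denominator in `hlt` leaves
`s² < a s`. -/
lemma sqrt_one_add_lt_of_lt_div {t a : ℝ} (ht : 0 < t)
    (hden : 0 < 1 - a * ((√(1 + t) - 1) / t))
    (hlt : t < (a - 1) / (1 - a * ((√(1 + t) - 1) / t))) :
    √(1 + t) < a := by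
  have hs_sq : √(1 + t) ^ 2 = 1 + t := sq_sqrt (by positivity)
  have hs_pos : 0 < √(1 + t) := sqrt_pos.2 (by positivity)
  rw [lt_div_iff₀ hden, mul_sub, mul_one, mul_left_comm, mul_div_cancel₀ _ ht.ne'] at hlt
  nlinarith

theorem hidden_constraint_fixed_general (ρ x R : ℝ) (hρ : 0 < ρ) (hx : 0 < x)
    (hden : 0 < 1 - (2 : ℝ) ^ R * ((Real.sqrt (1 + ρ * x) - 1) / (ρ * x)))
    (hlt : x < ((2 : ℝ) ^ R - 1)
      / (ρ * (1 - (2 : ℝ) ^ R * ((Real.sqrt (1 + ρ * x) - 1) / (ρ * x))))) :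
    x < ((2 : ℝ) ^ (2 * R) - 1) / ρ := by
  have hρx : 0 < ρ * x := mul_pos hρ hx
  have hsqrt : √(1 + ρ * x) < 2 ^ R := by
    refine sqrt_one_add_lt_of_lt_div hρx hden ?_
    rw [lt_div_iff₀ (mul_pos hρ hden)] at hlt
    rw [lt_div_iff₀ hden]
    linarith
  have hsq : 1 + ρ * x < (2 : ℝ) ^ (2 * R) :=
    calc 1 + ρ * x = √(1 + ρ * x) ^ 2 := (sq_sqrt (by positivity)).symm
      _ < (2 ^ R) ^ 2 := by gcongr
      _ = 2 ^ (2 * R) := by rw [mul_comm, ← rpow_mul_natCast (by norm_num)]; norm_num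
  rw [lt_div_iff₀ hρ]
  linarith

/-- Hidden constraint: for `ρ, x, R > 0`, if the denominator
`1 - 2^R (√(1+ρx)-1)/(ρx)` is positive and
`x < (2^R - 1)/(ρ(1 - 2^R (√(1+ρx)-1)/(ρx)))`, then `x < (2^{2R} - 1)/ρ`. -/
theorem hidden_constraint_fixed (ρ x R : ℝ) (hρ : 0 < ρ) (hx : 0 < x) (hR : 0 < R)
    (hden : 0 < 1 - (2 : ℝ) ^ R * ((Real.sqrt (1 + ρ * x) - 1) / (ρ * x)))
    (hlt : x < ((2 : ℝ) ^ R - 1)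
      / (ρ * (1 - (2 : ℝ) ^ R * ((Real.sqrt (1 + ρ * x) - 1) / (ρ * x))))) :
    x < ((2 : ℝ) ^ (2 * R) - 1) / ρ :=
  hidden_constraint_fixed_general ρ x R hρ hx hden hlt
end

section
/- For positive reals ρ, R with R > 0: if x_k > 0 and x_n ≥ x_k satisfy x_k ≤ x_n < (2^R − 1)/(ρ α²) where α² = (√(1+ρ x_k) − 1)/(ρ x_k), then x_k < (2^{2R} − 1)/ρ. -/
/-!
With `s = √(1 + ρ x_k)` one has `x_k ρ α² = s - 1`, so `x_k ≤ x_n` and the bound on `x_n` give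
`s - 1 < 2^R - 1`; squaring `s < 2^R` yields `1 + ρ x_k < 2^{2R}`.
-/

open Real

/-- The CR-NOMA power coefficient `α²` of a user with channel gain `x` at SNR `ρ`. -/
noncomputable def crNomaCoeff (ρ x : ℝ) : ℝ := (√(1 + ρ * x) - 1) / (ρ * x)

lemma crNomaCoeff_pos {ρ x : ℝ} (h : 0 < ρ * x) : 0 < crNomaCoeff ρ x := by
  have : 1 < √(1 + ρ * x) := (lt_sqrt zero_le_one).mpr (by linarith)
  exact div_pos (by linarith) h

lemma mul_mul_crNomaCoeff {ρ x : ℝ} (hρ : ρ ≠ 0) (hx : x ≠ 0) :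
    x * (ρ * crNomaCoeff ρ x) = √(1 + ρ * x) - 1 := by
  unfold crNomaCoeff
  field_simp

lemma rpow_two_mul_eq_sq {x : ℝ} (hx : 0 ≤ x) (y : ℝ) : x ^ (2 * y) = (x ^ y) ^ 2 := by
  simpa [mul_comm] using rpow_mul_natCast hx y 2

theorem hidden_constraint_dynamic_general (ρ R xk xn : ℝ) (hρ : 0 < ρ)
    (hxk : 0 < xk) (hkn : xk ≤ xn)
    (hlt : xn < ((2 : ℝ) ^ R - 1) / (ρ * ((Real.sqrt (1 + ρ * xk) - 1) / (ρ * xk)))) :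
    xk < ((2 : ℝ) ^ (2 * R) - 1) / ρ := by
  change xn < (2 ^ R - 1) / (ρ * crNomaCoeff ρ xk) at hlt
  have hc : 0 < ρ * crNomaCoeff ρ xk := mul_pos hρ (crNomaCoeff_pos (mul_pos hρ hxk))
  have hsqrt : √(1 + ρ * xk) < 2 ^ R :=
    calc √(1 + ρ * xk) = 1 + xk * (ρ * crNomaCoeff ρ xk) := by
          rw [mul_mul_crNomaCoeff hρ.ne' hxk.ne']; ring
      _ ≤ 1 + xn * (ρ * crNomaCoeff ρ xk) := by gcongr
      _ < 2 ^ R := by linarith [(lt_div_iff₀ hc).mp hlt]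
  have hsq := (sqrt_lt' (by positivity)).mp hsqrt
  rw [lt_div_iff₀ hρ, rpow_two_mul_eq_sq zero_le_two]
  linarith

/-- Hidden constraint (dynamic QoS): if `0 < x_k ≤ x_n < (2^R - 1)/(ρ α²)` with
`α² = (√(1+ρx_k) - 1)/(ρx_k)`, then `x_k < (2^{2R} - 1)/ρ`. -/
theorem hidden_constraint_dynamic (ρ R xk xn : ℝ) (hρ : 0 < ρ) (hR : 0 < R)
    (hxk : 0 < xk) (hkn : xk ≤ xn)
    (hlt : xn < ((2 : ℝ) ^ R - 1) / (ρ * ((Real.sqrt (1 + ρ * xk) - 1) / (ρ * xk)))) :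
    xk < ((2 : ℝ) ^ (2 * R) - 1) / ρ :=
  hidden_constraint_dynamic_general ρ R xk xn hρ hxk hkn hlt
end
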